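/- For all real parameters λ > 0 with λ ≠ 1 and φ > 1, and every real t, the moment generating function of the SMPtW distribution satisfies ∫₀^∞ exp(t·y) · ((log λ) φ y^(φ−1) exp((log λ)·exp(−y^φ) − y^φ))/(λ − 1) dy = Σ_{r=0}^∞ (t^r / r!) · ((log λ)/(λ − 1)) · Γ(r/φ + 1) · Σ_{j=0}^∞ (log λ)^j / (j! · (j + 1)^(r/φ + 1)), with both the integral and the iterated series converging. -/

import Mathlib

open Real MeasureTheory

/-- The SMPtW probability density function with parameters `lam > 0`, `lam ≠ 1`, `phi > 0`. -/
noncomputable def smptwPDF (lam phi y : ℝ) : ℝ :=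
  (Real.log lam * phi * y ^ (phi - 1) *
    Real.exp (Real.log lam * Real.exp (-(y ^ phi)) - y ^ phi)) / (lam - 1)

open Set
open scoped Nat

/-!
Expanding `exp (log λ · e^{-y^φ})` as a power series writes `y ^ r f(y)` as a series of
Gamma-type integrands `y^{r+φ-1} e^{-(j+1) y^φ}`, which gives the moments of `f`; expanding
`exp (t y)` writes the moment generating function as the exponential series of the moments.
Both interchanges of sum and integral are justified by summability of the integrals of the
absolute values. For `φ > 1` the factor `e^{-y^φ}` beats `e^{|t| y}`, so `exp (|t| y) f(y)` is
integrable.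
-/

lemma Real.hasSum_pow_div_factorial (x : ℝ) : HasSum (fun n : ℕ => x ^ n / n !) (exp x) := by
  rw [exp_eq_exp_ℝ]
  exact NormedSpace.expSeries_div_hasSum_exp x

lemma hasSum_integral_pow_mul_of_integrable_exp_abs_mul {μ : Measure ℝ} {f : ℝ → ℝ}
    {t : ℝ} (hf : AEStronglyMeasurable f μ) (hexp : Integrable (fun y => exp |t * y| * f y) μ) :
    HasSum (fun r : ℕ => t ^ r / r ! * ∫ y, y ^ r * f y ∂μ)
      (∫ y, exp (t * y) * f y ∂μ) := by
  set F : ℕ → ℝ → ℝ := fun r y => (t * y) ^ r / r ! * f y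
  have hF_norm (r : ℕ) (y : ℝ) : ‖F r y‖ = |t * y| ^ r / r ! * |f y| := by
    simp only [F, norm_mul, norm_div, norm_pow, norm_eq_abs, Nat.abs_cast, abs_mul]
  have hF_int (r : ℕ) : Integrable (F r) μ := by
    refine hexp.mono (by fun_prop) (ae_of_all _ fun y => ?_)
    rw [hF_norm, norm_mul, norm_eq_abs, abs_exp, norm_eq_abs]
    gcongr
    exact pow_div_factorial_le_exp _ (abs_nonneg _) r
  have hF_sum : Summable fun r => ∫ y, ‖F r y‖ ∂μ := by
    refine summable_of_sum_range_le (c := ∫ y, ‖exp |t * y| * f y‖ ∂μ)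
      (fun r => integral_nonneg fun y => norm_nonneg _) fun n => ?_
    rw [← integral_finsetSum _ fun r _ => (hF_int r).norm]
    refine integral_mono (integrable_finsetSum _ fun r _ => (hF_int r).norm) hexp.norm fun y => ?_
    simp only [hF_norm, ← Finset.sum_mul, norm_mul, norm_eq_abs, abs_exp]
    gcongr
    exact sum_le_exp_of_nonneg (abs_nonneg _) n
  have h := hasSum_integral_of_summable_integral_norm hF_int hF_sum
  rw [integral_congr_ae (ae_of_all _ fun y =>
    ((hasSum_pow_div_factorial (t * y)).mul_right (f y)).tsum_eq.symm)]
  refine h.congr_fun fun r => ?_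
  rw [← integral_const_mul]
  congr 1 with y
  simp only [F, mul_pow]
  ring

lemma hasSum_exp_mul_exp_neg_sub (L u : ℝ) :
    HasSum (fun j : ℕ => L ^ j / j ! * exp (-(j + 1) * u)) (exp (L * exp (-u) - u)) := by
  rw [sub_eq_add_neg, exp_add]
  refine ((hasSum_pow_div_factorial (L * exp (-u))).mul_right (exp (-u))).congr_fun fun j => ?_
  rw [mul_pow, ← exp_nat_mul, mul_div_right_comm, mul_assoc, ← exp_add]
  ring_nf

lemma integral_rpow_add_sub_one_mul_exp_neg_mul_rpow {p r b : ℝ} (hp : 0 < p) (hr : -p < r)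
    (hb : 0 < b) :
    ∫ y in Ioi 0, y ^ (r + p - 1) * exp (-b * y ^ p) =
      Gamma (r / p + 1) / (p * b ^ (r / p + 1)) := by
  have hq : -1 < r + p - 1 := by linarith
  have hexp : (r + p - 1 + 1) / p = r / p + 1 := by field_simp; ring
  rw [integral_rpow_mul_exp_neg_mul_rpow hp hq hb, neg_div, hexp, rpow_neg hb.le]
  field_simp

lemma summable_pow_div_factorial_mul_rpow (L : ℝ) {s : ℝ} (hs : 0 ≤ s) :
    Summable fun j : ℕ => L ^ j / (j ! * ((j : ℝ) + 1) ^ s) := by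
  refine (summable_pow_div_factorial |L|).of_norm_bounded fun j => ?_
  have hj : 1 ≤ ((j : ℝ) + 1) ^ s := one_le_rpow (by linarith [j.cast_nonneg (α := ℝ)]) hs
  rw [norm_div, norm_pow, norm_mul, norm_eq_abs, norm_eq_abs, norm_eq_abs, Nat.abs_cast,
    abs_of_nonneg (zero_le_one.trans hj)]
  exact div_le_div_of_nonneg_left (by positivity) (by positivity)
    (le_mul_of_one_le_right (by positivity) hj)

lemma exists_mul_le_add_rpow_div_two {p : ℝ} (hp : 1 < p) (c : ℝ) :
    ∃ M, ∀ y, 0 ≤ y → c * y ≤ M + y ^ p / 2 := by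
  have hp0 : 0 < p := by linarith
  set k := (p / 2) ^ p⁻¹
  have hk : 0 < k := by positivity
  -- Young's inequality for `(k y) (|c| / k)`, with `k` chosen so that `(k y) ^ p / p = y ^ p / 2`
  refine ⟨(|c| / k) ^ p.conjExponent / p.conjExponent, fun y hy => ?_⟩
  have hky : (k * y) ^ p / p = y ^ p / 2 := by
    rw [mul_rpow hk.le hy, rpow_inv_rpow (by positivity) hp0.ne']
    field_simp
  calc c * y ≤ |c| * y := mul_le_mul_of_nonneg_right (le_abs_self c) hy
    _ = (k * y) * (|c| / k) := by field_simp
    _ ≤ _ := young_inequality_of_nonneg (by positivity) (by positivity)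
        (HolderConjugate.conjExponent hp)
    _ = _ := by rw [hky]; ring

lemma integrableOn_exp_mul_smptwPDF (lam : ℝ) {phi : ℝ} (hphi : 1 < phi) (c : ℝ) :
    IntegrableOn (fun y => exp (c * y) * smptwPDF lam phi y) (Ioi 0) := by
  obtain ⟨M, hM⟩ := exists_mul_le_add_rpow_div_two hphi c
  set L := log lam
  set C := |L / (lam - 1) * phi| * exp (M + |L|)
  have hdom : IntegrableOn (fun y => C * (y ^ (phi - 1) * exp (-(1 / 2) * y ^ phi))) (Ioi 0) :=
    (integrableOn_rpow_mul_exp_neg_mul_rpow (by linarith) (by linarith) one_half_pos).const_mul C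
  refine hdom.mono' (by unfold smptwPDF; fun_prop) ?_
  filter_upwards [ae_restrict_mem measurableSet_Ioi] with y (hy : 0 < y)
  have hexp : c * y + (L * exp (-y ^ phi) - y ^ phi) ≤ M + |L| + -(1 / 2) * y ^ phi := by
    have hLe : L * exp (-y ^ phi) ≤ |L| := by
      have : exp (-y ^ phi) ≤ 1 := exp_le_one_iff.mpr (by simp [rpow_nonneg hy.le])
      nlinarith [le_abs_self L, abs_nonneg L, exp_pos (-y ^ phi)]
    linarith [hM y hy.le]
  calc ‖exp (c * y) * smptwPDF lam phi y‖
      = |L / (lam - 1) * phi| *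
          (y ^ (phi - 1) * exp (c * y + (L * exp (-y ^ phi) - y ^ phi))) := by
        rw [smptwPDF, exp_add, norm_eq_abs, ← abs_of_nonneg (by positivity :
          0 ≤ y ^ (phi - 1) * (exp (c * y) * exp (L * exp (-y ^ phi) - y ^ phi))), ← abs_mul]
        congr 1; ring
    _ ≤ |L / (lam - 1) * phi| * (y ^ (phi - 1) * exp (M + |L| + -(1 / 2) * y ^ phi)) := by
        gcongr
    _ = C * (y ^ (phi - 1) * exp (-(1 / 2) * y ^ phi)) := by
        rw [exp_add]; ring

lemma hasSum_pow_mul_smptwPDF (lam phi : ℝ) (r : ℕ) {y : ℝ} (hy : 0 < y) :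
    HasSum (fun j : ℕ => log lam / (lam - 1) * (log lam ^ j / j !) * phi *
        (y ^ ((r : ℝ) + phi - 1) * exp (-(j + 1) * y ^ phi)))
      (y ^ r * smptwPDF lam phi y) := by
  have h := (hasSum_exp_mul_exp_neg_sub (log lam) (y ^ phi)).mul_left
    (log lam / (lam - 1) * phi * (y ^ r * y ^ (phi - 1)))
  rw [show y ^ r * smptwPDF lam phi y = log lam / (lam - 1) * phi * (y ^ r * y ^ (phi - 1)) *
      exp (log lam * exp (-y ^ phi) - y ^ phi) by unfold smptwPDF; ring]
  refine h.congr_fun fun j => ?_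
  rw [add_sub_assoc, rpow_add hy, rpow_natCast]
  ring

lemma integral_pow_mul_smptwPDF (lam : ℝ) {phi : ℝ} (hphi : 0 < phi) (r : ℕ) :
    ∫ y in Ioi 0, y ^ r * smptwPDF lam phi y =
      log lam / (lam - 1) * Gamma (r / phi + 1) *
        ∑' j : ℕ, log lam ^ j / (j ! * ((j : ℝ) + 1) ^ ((r : ℝ) / phi + 1)) := by
  set L := log lam
  set s : ℝ := r / phi + 1
  have hs : 0 ≤ s := by positivity
  set g : ℕ → ℝ → ℝ := fun j y => y ^ ((r : ℝ) + phi - 1) * exp (-(j + 1) * y ^ phi)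
  have hg_int (j : ℕ) : IntegrableOn (g j) (Ioi 0) :=
    integrableOn_rpow_mul_exp_neg_mul_rpow (by linarith [r.cast_nonneg (α := ℝ)]) hphi
      (by positivity)
  have hg_integral (j : ℕ) : ∫ y in Ioi 0, g j y = Gamma s / (phi * ((j : ℝ) + 1) ^ s) :=
    integral_rpow_add_sub_one_mul_exp_neg_mul_rpow hphi
      (by linarith [r.cast_nonneg (α := ℝ)]) (by positivity)
  set c : ℕ → ℝ := fun j => L / (lam - 1) * (L ^ j / j !) * phi
  have hc_integral (j : ℕ) : c j * ∫ y in Ioi 0, g j y =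
      L / (lam - 1) * Gamma s * (L ^ j / (j ! * ((j : ℝ) + 1) ^ s)) := by
    simp only [c, hg_integral]
    field_simp
  have hnorm_integral (j : ℕ) :
      ∫ y in Ioi 0, ‖c j * g j y‖ = |c j * ∫ y in Ioi 0, g j y| := by
    rw [abs_mul, abs_of_nonneg (setIntegral_nonneg measurableSet_Ioi fun y (hy : 0 < y) => by
      positivity), ← integral_const_mul]
    refine setIntegral_congr_fun measurableSet_Ioi fun y (hy : 0 < y) => ?_
    rw [norm_mul, norm_eq_abs, norm_of_nonneg (by positivity : 0 ≤ g j y)]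
  have hsum := hasSum_integral_of_summable_integral_norm (fun j => (hg_int j).const_mul (c j))
    (by simpa only [hnorm_integral, hc_integral] using
      ((summable_pow_div_factorial_mul_rpow L hs).mul_left (L / (lam - 1) * Gamma s)).abs)
  rw [← setIntegral_congr_fun measurableSet_Ioi fun y (hy : 0 < y) =>
    (hasSum_pow_mul_smptwPDF lam phi r hy).tsum_eq, ← hsum.tsum_eq]
  simp only [integral_const_mul, hc_integral, tsum_mul_left]

theorem smptw_mgf_general (lam phi : ℝ)
    (hphi : 1 < phi) (t : ℝ) :
    IntegrableOn (fun y : ℝ => Real.exp (t * y) * smptwPDF lam phi y)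
      (Set.Ioi (0 : ℝ)) ∧
    (∀ r : ℕ, Summable (fun j : ℕ =>
      (Real.log lam) ^ j /
        ((j.factorial : ℝ) * ((j : ℝ) + 1) ^ ((r : ℝ) / phi + 1)))) ∧
    Summable (fun r : ℕ =>
      (t ^ r / (r.factorial : ℝ)) * (Real.log lam / (lam - 1)) *
        Real.Gamma ((r : ℝ) / phi + 1) *
        ∑' j : ℕ, (Real.log lam) ^ j /
          ((j.factorial : ℝ) * ((j : ℝ) + 1) ^ ((r : ℝ) / phi + 1))) ∧
    ∫ y in Set.Ioi (0 : ℝ), Real.exp (t * y) * smptwPDF lam phi y =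
      ∑' r : ℕ,
        (t ^ r / (r.factorial : ℝ)) * (Real.log lam / (lam - 1)) *
          Real.Gamma ((r : ℝ) / phi + 1) *
          ∑' j : ℕ, (Real.log lam) ^ j /
            ((j.factorial : ℝ) * ((j : ℝ) + 1) ^ ((r : ℝ) / phi + 1)) := by
  have hexp : IntegrableOn (fun y => exp |t * y| * smptwPDF lam phi y) (Ioi 0) :=
    (integrableOn_exp_mul_smptwPDF lam hphi |t|).congr_fun
      (fun y (hy : 0 < y) => by rw [abs_mul, abs_of_pos hy]) measurableSet_Ioi
  have hmgf := hasSum_integral_pow_mul_of_integrable_exp_abs_mul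
    (by unfold smptwPDF; fun_prop) hexp
  simp only [integral_pow_mul_smptwPDF lam (zero_lt_one.trans hphi), ← mul_assoc] at hmgf
  exact ⟨integrableOn_exp_mul_smptwPDF lam hphi t,
    fun r => summable_pow_div_factorial_mul_rpow _ (by positivity), hmgf.summable,
    hmgf.tsum_eq.symm⟩

/-- the moment generating function of the SMPtW distribution,
with convergence of the integral and of the iterated series. -/
theorem smptw_mgf (lam phi : ℝ)
    (hlam : 0 < lam) (hlam1 : lam ≠ 1) (hphi : 1 < phi) (t : ℝ) :
    IntegrableOn (fun y : ℝ => Real.exp (t * y) * smptwPDF lam phi y)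
      (Set.Ioi (0 : ℝ)) ∧
    (∀ r : ℕ, Summable (fun j : ℕ =>
      (Real.log lam) ^ j /
        ((j.factorial : ℝ) * ((j : ℝ) + 1) ^ ((r : ℝ) / phi + 1)))) ∧
    Summable (fun r : ℕ =>
      (t ^ r / (r.factorial : ℝ)) * (Real.log lam / (lam - 1)) *
        Real.Gamma ((r : ℝ) / phi + 1) *
        ∑' j : ℕ, (Real.log lam) ^ j /
          ((j.factorial : ℝ) * ((j : ℝ) + 1) ^ ((r : ℝ) / phi + 1))) ∧
    ∫ y in Set.Ioi (0 : ℝ), Real.exp (t * y) * smptwPDF lam phi y =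
      ∑' r : ℕ,
        (t ^ r / (r.factorial : ℝ)) * (Real.log lam / (lam - 1)) *
          Real.Gamma ((r : ℝ) / phi + 1) *
          ∑' j : ℕ, (Real.log lam) ^ j /
            ((j.factorial : ℝ) * ((j : ℝ) + 1) ^ ((r : ℝ) / phi + 1)) :=
  smptw_mgf_general lam phi hphi t
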